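/- arXiv:2312.01048 — 2 statements merged into one kernel-verified Lean document; each statement's English description precedes it below -/
import Mathlib

section
/- Let A = (a_{ij}) ∈ M_n(ℝ₊) and let 1 ≤ k < n be a positive integer. Set c = min{ max_{j=1,…,k} a_{i_j i_j} : 1 ≤ i_1 < i_2 < ⋯ < i_k ≤ n } and d = max_{1≤i,j≤n} a_{ij}. Then every z with c ≤ z ≤ d belongs to W_max^k(A), i.e. [c, d] ⊆ W_max^k(A). -/
open Matrix

/-- Max-algebra matrix product: `(A ⊗ B) i j = max_p (A i p * B p j)`. -/
noncomputable def maxMul {n m l : ℕ} (A : Matrix (Fin n) (Fin m) ℝ)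
    (B : Matrix (Fin m) (Fin l) ℝ) : Matrix (Fin n) (Fin l) ℝ :=
  Matrix.of fun i j => ⨆ p, A i p * B p j

/-- Max trace: `tr⊗(A) = max_i A i i`. -/
noncomputable def trMax {n : ℕ} (A : Matrix (Fin n) (Fin n) ℝ) : ℝ := ⨆ i, A i i

/-- The set 𝒳_{n×k} of nonnegative `n×k` matrices with `Xᵀ ⊗ X = I_k`. -/
def Xset (n k : ℕ) : Set (Matrix (Fin n) (Fin k) ℝ) :=
  {X | (∀ i j, 0 ≤ X i j) ∧ maxMul Xᵀ X = 1}

/-- The max `k`-numerical range `W_max^k(A) = { tr⊗(Xᵀ⊗A⊗X) : X ∈ 𝒳_{n×k} }`. -/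
noncomputable def Wmax {n : ℕ} (k : ℕ) (A : Matrix (Fin n) (Fin n) ℝ) : Set ℝ :=
  {z | ∃ X ∈ Xset n k, z = trMax (maxMul (maxMul Xᵀ A) X)}

/-!
Pick `k` indices whose diagonal entries are at most `z` (possible since `c ≤ z`) and an entry
`A r s ≥ z` (possible since `z ≤ d`) with `r` outside the chosen indices. The identity columns at
the chosen indices form an `X ∈ 𝒳_{n×k}` with value `≤ z`. Filling one column with `t` on all
remaining rows keeps the columns of disjoint support, so `X t ∈ 𝒳_{n×k}` for `t ∈ [0, 1]`; at
`t = 1` that column (chosen to cover `s`) sees `A r s`, so the value is `≥ z`. The value is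
continuous in `t`, and the intermediate value theorem gives `z`.
-/

section MaxAlgebra

variable {n k : ℕ}

lemma continuous_ciSup_of_fintype {X L ι : Type*} [TopologicalSpace X] [TopologicalSpace L]
    [ConditionallyCompleteLattice L] [ContinuousSup L] [Fintype ι] {f : ι → X → L}
    (hf : ∀ i, Continuous (f i)) : Continuous fun x => ⨆ i, f i x := by
  cases isEmpty_or_nonempty ι
  · simpa only [iSup_of_empty'] using continuous_const
  · simp_rw [← Finset.sup'_univ_eq_ciSup]
    exact Continuous.finset_sup'_apply _ fun i _ => hf i

lemma trMax_maxMul_transpose_maxMul (A : Matrix (Fin n) (Fin n) ℝ)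
    {X : Matrix (Fin n) (Fin k) ℝ} (hX : ∀ i p, 0 ≤ X i p) :
    trMax (maxMul (maxMul Xᵀ A) X) = ⨆ p, ⨆ j, ⨆ i, X i p * A i j * X j p := by
  simp only [trMax, maxMul, Matrix.of_apply, Matrix.transpose_apply,
    Real.iSup_mul_of_nonneg (hX _ _)]

lemma mul_mul_le_trMax (A : Matrix (Fin n) (Fin n) ℝ) {X : Matrix (Fin n) (Fin k) ℝ}
    (hX : ∀ i p, 0 ≤ X i p) (i j : Fin n) (p : Fin k) :
    X i p * A i j * X j p ≤ trMax (maxMul (maxMul Xᵀ A) X) := by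
  rw [trMax_maxMul_transpose_maxMul A hX]
  refine le_ciSup_of_le (Finite.bddAbove_range _) p ?_
  refine le_ciSup_of_le (Finite.bddAbove_range _) j ?_
  exact le_ciSup (Finite.bddAbove_range (fun i => X i p * A i j * X j p)) i

lemma maxMul_transpose_self_eq_one {X : Matrix (Fin n) (Fin k) ℝ} (h0 : ∀ i p, 0 ≤ X i p)
    (h1 : ∀ i p, X i p ≤ 1) (hcol : ∀ p, ∃ i, X i p = 1)
    (hdisj : ∀ i p q, p ≠ q → X i p * X i q = 0) :
    maxMul Xᵀ X = 1 := by
  ext p q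
  simp only [maxMul, Matrix.of_apply, Matrix.transpose_apply]
  rcases eq_or_ne p q with rfl | hpq
  · obtain ⟨i, hi⟩ := hcol p
    have : Nonempty (Fin n) := ⟨i⟩
    rw [Matrix.one_apply_eq]
    refine le_antisymm (ciSup_le fun j => mul_le_one₀ (h1 j p) (h0 j p) (h1 j p)) ?_
    exact le_ciSup_of_le (Finite.bddAbove_range _) i (by rw [hi, one_mul])
  · simp only [hdisj _ _ _ hpq, Real.iSup_const_zero, Matrix.one_apply_ne hpq]

lemma Icc_subset_Wmax_of_continuous (A : Matrix (Fin n) (Fin n) ℝ)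
    {X : ℝ → Matrix (Fin n) (Fin k) ℝ} (hX : ∀ i p, Continuous fun t => X t i p)
    (hmem : ∀ t ∈ Set.Icc (0 : ℝ) 1, X t ∈ Xset n k) :
    Set.Icc (trMax (maxMul (maxMul (X 0)ᵀ A) (X 0))) (trMax (maxMul (maxMul (X 1)ᵀ A) (X 1)))
      ⊆ Wmax k A := by
  intro z hz
  have hcont : ContinuousOn (fun t => trMax (maxMul (maxMul (X t)ᵀ A) (X t))) (Set.Icc 0 1) := by
    refine ContinuousOn.congr (f := fun t => ⨆ p, ⨆ j, ⨆ i, X t i p * A i j * X t j p) ?_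
      fun t ht => trMax_maxMul_transpose_maxMul A (hmem t ht).1
    refine Continuous.continuousOn (continuous_ciSup_of_fintype fun p =>
      continuous_ciSup_of_fintype fun j => continuous_ciSup_of_fintype fun i => ?_)
    exact ((hX i p).mul continuous_const).mul (hX j p)
  obtain ⟨t, ht, rfl⟩ := intermediate_value_Icc zero_le_one hcont hz
  exact ⟨X t, hmem t ht, rfl⟩

end MaxAlgebra

section FillColumn

variable {n k : ℕ} (e : Fin k ↪ Fin n) (p₀ : Fin k) {t : ℝ}

open Classical in
noncomputable def fillColumn (t : ℝ) : Matrix (Fin n) (Fin k) ℝ :=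
  Matrix.of fun i p => if i = e p then 1 else if p = p₀ ∧ i ∉ Set.range e then t else 0

lemma fillColumn_nonneg (ht : 0 ≤ t) (i : Fin n) (p : Fin k) : 0 ≤ fillColumn e p₀ t i p := by
  simp only [fillColumn, Matrix.of_apply]
  split_ifs <;> norm_num [ht]

lemma fillColumn_le_one (ht : t ≤ 1) (i : Fin n) (p : Fin k) : fillColumn e p₀ t i p ≤ 1 := by
  simp only [fillColumn, Matrix.of_apply]
  split_ifs <;> norm_num [ht]

lemma continuous_fillColumn_apply (i : Fin n) (p : Fin k) :
    Continuous fun t => fillColumn e p₀ t i p := by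
  simp only [fillColumn, Matrix.of_apply]
  split_ifs
  exacts [continuous_const, continuous_id, continuous_const]

lemma fillColumn_mem_Xset (ht : t ∈ Set.Icc (0 : ℝ) 1) : fillColumn e p₀ t ∈ Xset n k := by
  refine ⟨fillColumn_nonneg e p₀ ht.1, maxMul_transpose_self_eq_one (fillColumn_nonneg e p₀ ht.1)
    (fillColumn_le_one e p₀ ht.2) (fun p => ⟨e p, by simp [fillColumn]⟩) ?_⟩
  intro i p q hpq
  simp only [fillColumn, Matrix.of_apply]
  by_cases hi : i ∈ Set.range e
  · obtain ⟨m, rfl⟩ := hi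
    simp only [e.injective.eq_iff, Set.mem_range_self, not_true_eq_false, and_false, if_false]
    split_ifs with h₁ h₂ <;> simp_all
  · have hne : ∀ p, i ≠ e p := fun p h => hi ⟨p, h.symm⟩
    simp only [hne, hi, if_false, not_false_eq_true, and_true]
    split_ifs with h₁ h₂
    · exact absurd (h₁.trans h₂.symm) hpq
    all_goals simp

lemma fillColumn_one_apply {i : Fin n} (hi : i = e p₀ ∨ i ∉ Set.range e) :
    fillColumn e p₀ 1 i p₀ = 1 := by
  simp only [fillColumn, Matrix.of_apply]
  split_ifs <;> tauto

lemma trMax_fillColumn_zero_le (A : Matrix (Fin n) (Fin n) ℝ) {z : ℝ} (hz : 0 ≤ z)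
    (hdiag : ∀ p, A (e p) (e p) ≤ z) :
    trMax (maxMul (maxMul (fillColumn e p₀ 0)ᵀ A) (fillColumn e p₀ 0)) ≤ z := by
  rw [trMax_maxMul_transpose_maxMul A (fillColumn_nonneg e p₀ le_rfl)]
  refine Real.iSup_le (fun p => Real.iSup_le (fun j => Real.iSup_le (fun i => ?_) hz) hz) hz
  simp only [fillColumn, Matrix.of_apply, ite_self]
  split_ifs with hi hj
  · simpa [hi, hj] using hdiag p
  all_goals simpa using hz

end FillColumn

section Choice

variable {n k : ℕ} (A : Matrix (Fin n) (Fin n) ℝ) {z : ℝ}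

lemma exists_card_eq_forall_diag_le (hkn : k ≤ n)
    (h : ⨅ S : {S : Finset (Fin n) // S.card = k}, ⨆ j : {x : Fin n // x ∈ S.1}, A j.1 j.1 ≤ z) :
    ∃ S : Finset (Fin n), S.card = k ∧ ∀ j ∈ S, A j j ≤ z := by
  have : Nonempty {S : Finset (Fin n) // S.card = k} := by
    obtain ⟨S, -, hS⟩ := Finset.exists_subset_card_eq (s := (Finset.univ : Finset (Fin n))) (n := k)
      (by rwa [Finset.card_univ, Fintype.card_fin])
    exact ⟨⟨S, hS⟩⟩
  obtain ⟨S, hS⟩ := exists_eq_ciInf_of_finite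
    (f := fun S : {S : Finset (Fin n) // S.card = k} => ⨆ j : {x // x ∈ S.1}, A j.1 j.1)
  refine ⟨S.1, S.2, fun j hj => ?_⟩
  exact (le_ciSup (Finite.bddAbove_range fun j : {x // x ∈ S.1} => A j.1 j.1) ⟨j, hj⟩).trans
    (hS.trans_le h)

lemma exists_le_apply_of_le_iSup [NeZero n] (h : z ≤ ⨆ i, ⨆ j, A i j) : ∃ r s, z ≤ A r s := by
  obtain ⟨r, hr⟩ := exists_eq_ciSup_of_finite (f := fun i => ⨆ j, A i j)
  obtain ⟨s, hs⟩ := exists_eq_ciSup_of_finite (f := A r)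
  exact ⟨r, s, by rw [hs, hr]; exact h⟩

/-- If some diagonal entry exceeds `z` it serves as `A r r`; otherwise every index is admissible
and `k < n` leaves room to avoid `r`. -/
lemma exists_diag_le_and_notMem (hkn : k < n)
    (hS : ∃ S : Finset (Fin n), S.card = k ∧ ∀ j ∈ S, A j j ≤ z) (hd : ∃ r s, z ≤ A r s) :
    ∃ U : Finset (Fin n), U.card = k ∧ (∀ u ∈ U, A u u ≤ z) ∧ ∃ r ∉ U, ∃ s, z ≤ A r s := by
  by_cases hbig : ∃ m, z < A m m
  · obtain ⟨m, hm⟩ := hbig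
    obtain ⟨S, hS, hSz⟩ := hS
    exact ⟨S, hS, hSz, m, fun hmS => (hSz m hmS).not_gt hm, m, hm.le⟩
  · simp only [not_exists, not_lt] at hbig
    obtain ⟨r, s, hrs⟩ := hd
    obtain ⟨U, hUr, hU⟩ := Finset.exists_subset_card_eq (s := Finset.univ.erase r) (n := k)
      (by rw [Finset.card_erase_of_mem (Finset.mem_univ r)]; simp; omega)
    exact ⟨U, hU, fun u _ => hbig u, r, fun hr => by simpa using hUr hr, s, hrs⟩

end Choice

/-- For a nonnegative `n × n` matrix `A` and `1 ≤ k < n`, with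
`c = min over k-element subsets S of max_{j ∈ S} a_{jj}` and `d = max_{i,j} a_{ij}`,
every `z` with `c ≤ z ≤ d` belongs to `W_max^k(A)`, i.e. `[c, d] ⊆ W_max^k(A)`. -/
theorem stmt_4 {n k : ℕ} (hk : 1 ≤ k) (hkn : k < n)
    (A : Matrix (Fin n) (Fin n) ℝ) (hA : ∀ i j, 0 ≤ A i j) :
    Set.Icc
        (⨅ S : {S : Finset (Fin n) // S.card = k}, ⨆ j : {x : Fin n // x ∈ S.1}, A j.1 j.1)
        (⨆ i, ⨆ j, A i j) ⊆ Wmax k A := by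
  rintro z ⟨hcz, hzd⟩
  have : NeZero n := ⟨by omega⟩
  obtain ⟨U, hU, hUz, r, hrU, s, hrs⟩ := exists_diag_le_and_notMem A hkn
    (exists_card_eq_forall_diag_le A hkn.le hcz) (exists_le_apply_of_le_iSup A hzd)
  let e : Fin k ↪ Fin n := (U.orderEmbOfFin hU).toEmbedding
  have he : Set.range e = U := U.range_orderEmbOfFin hU
  obtain ⟨p₀, hsp₀⟩ : ∃ p₀, s = e p₀ ∨ s ∉ Set.range e := by
    by_cases hs : s ∈ Set.range e
    · obtain ⟨p, hp⟩ := hs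
      exact ⟨p, .inl hp.symm⟩
    · exact ⟨⟨0, hk⟩, .inr hs⟩
  have hz : 0 ≤ z := by
    obtain ⟨u, hu⟩ := Finset.card_pos.mp (hU ▸ hk)
    exact (hA u u).trans (hUz u hu)
  refine Icc_subset_Wmax_of_continuous A (continuous_fillColumn_apply e p₀)
    (fun t ht => fillColumn_mem_Xset e p₀ ht) ⟨?_, ?_⟩
  · exact trMax_fillColumn_zero_le e p₀ A hz fun p => hUz _ (by rw [← Finset.mem_coe, ← he]; exact Set.mem_range_self p)
  · calc z ≤ fillColumn e p₀ 1 r p₀ * A r s * fillColumn e p₀ 1 s p₀ := by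
          rw [fillColumn_one_apply e p₀ (.inr (by rwa [he, Finset.mem_coe])), fillColumn_one_apply e p₀ hsp₀,
            one_mul, mul_one]
          exact hrs
      _ ≤ _ := mul_mul_le_trMax A (fillColumn_nonneg e p₀ zero_le_one) r s p₀
end

section
/- Let A, B ∈ M_n(ℝ₊) and 1 ≤ k ≤ n. Then W_max^k(A ⊕ B) ⊆ W_max^k(A) ⊕ W_max^k(B), where for sets S, T ⊆ ℝ₊ one puts S ⊕ T = { max{s,t} : s ∈ S, t ∈ T }. Moreover, for k = n equality holds: W_max^n(A ⊕ B) = W_max^n(A) ⊕ W_max^n(B). -/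
open Matrix

/-
Both parts rest on the fact that, for nonnegative `X`, the max-algebra product distributes over
`⊕` on either side and `tr⊗` turns `⊕` into `max`; hence the single matrix `X` realising a point
of `W_max^k(A ⊕ B)` realises points of `W_max^k(A)` and `W_max^k(B)` with that maximum.
For `k = n` the conditions `Xᵀ ⊗ X = I` force `X` to be a permutation matrix (every column has
an entry `1`, and distinct columns have disjoint supports), so
`W_max^n(C) = {tr⊗ C}` for every nonnegative `C`, and the equality becomes `tr⊗(A ⊕ B) = max`.
-/

section Distributivity

variable {n m l : ℕ}

lemma ciSup_max_eq {ι : Type*} [Finite ι] (f g : ι → ℝ) :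
    (⨆ i, max (f i) (g i)) = max (⨆ i, f i) (⨆ i, g i) :=
  ciSup_sup_eq (Finite.bddAbove_range f) (Finite.bddAbove_range g)

lemma maxMul_max_right {X : Matrix (Fin n) (Fin m) ℝ} (hX : ∀ i j, 0 ≤ X i j)
    (A B : Matrix (Fin m) (Fin l) ℝ) :
    maxMul X (of fun i j => max (A i j) (B i j)) =
      of fun i j => max (maxMul X A i j) (maxMul X B i j) := by
  ext i j
  simp only [maxMul, of_apply, ← ciSup_max_eq, mul_max_of_nonneg _ _ (hX i _)]

lemma maxMul_max_left {X : Matrix (Fin m) (Fin l) ℝ} (hX : ∀ i j, 0 ≤ X i j)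
    (A B : Matrix (Fin n) (Fin m) ℝ) :
    maxMul (of fun i j => max (A i j) (B i j)) X =
      of fun i j => max (maxMul A X i j) (maxMul B X i j) := by
  ext i j
  simp only [maxMul, of_apply, ← ciSup_max_eq, max_mul_of_nonneg _ _ (hX _ j)]

lemma trMax_max (A B : Matrix (Fin n) (Fin n) ℝ) :
    trMax (of fun i j => max (A i j) (B i j)) = max (trMax A) (trMax B) :=
  ciSup_max_eq _ _

lemma trMax_conj_max {X : Matrix (Fin n) (Fin m) ℝ} (hX : ∀ i j, 0 ≤ X i j)
    (A B : Matrix (Fin n) (Fin n) ℝ) :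
    trMax (maxMul (maxMul Xᵀ (of fun i j => max (A i j) (B i j))) X) =
      max (trMax (maxMul (maxMul Xᵀ A) X)) (trMax (maxMul (maxMul Xᵀ B) X)) := by
  rw [maxMul_max_right (X := Xᵀ) (fun i j => hX j i), maxMul_max_left hX, trMax_max]

end Distributivity

lemma Wmax_max_subset {n : ℕ} (k : ℕ) (A B : Matrix (Fin n) (Fin n) ℝ) :
    Wmax k (of fun i j => max (A i j) (B i j)) ⊆
      {z | ∃ s ∈ Wmax k A, ∃ t ∈ Wmax k B, z = max s t} := by
  rintro z ⟨X, hX, rfl⟩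
  exact ⟨_, ⟨X, hX, rfl⟩, _, ⟨X, hX, rfl⟩, trMax_conj_max hX.1 A B⟩

lemma ciSup_ite_eq {ι : Type*} [Finite ι] [DecidableEq ι] {f : ι → ℝ} {p₀ : ι}
    (hf : 0 ≤ f p₀) : (⨆ p, if p = p₀ then f p else 0) = f p₀ := by
  have : Nonempty ι := ⟨p₀⟩
  refine le_antisymm (ciSup_le fun p => ?_) ?_
  · split_ifs with hp
    · rw [hp]
    · exact hf
  · simpa using le_ciSup (Finite.bddAbove_range fun p => if p = p₀ then f p else 0) p₀

namespace Xset

variable {n k : ℕ} {X : Matrix (Fin n) (Fin k) ℝ}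

lemma exists_eq_one (hX : X ∈ Xset n k) (j : Fin k) : ∃ p, X p j = 1 := by
  have hdiag : (⨆ p, X p j * X p j) = 1 := by
    simpa [maxMul] using congrFun (congrFun hX.2 j) j
  cases isEmpty_or_nonempty (Fin n)
  · simp at hdiag
  obtain ⟨p, hp⟩ := exists_eq_ciSup_of_finite (f := fun p => X p j * X p j)
  exact ⟨p, (mul_self_eq_one_iff.mp (hp.trans hdiag)).resolve_right
    (by linarith [hX.1 p j])⟩

lemma mul_eq_zero_of_ne (hX : X ∈ Xset n k) {i j : Fin k} (hij : i ≠ j) (p : Fin n) :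
    X p i * X p j = 0 := by
  have hoff : (⨆ q, X q i * X q j) = 0 := by
    simpa [maxMul, one_apply, hij] using congrFun (congrFun hX.2 i) j
  refine le_antisymm ?_ (mul_nonneg (hX.1 p i) (hX.1 p j))
  exact hoff ▸ le_ciSup (Finite.bddAbove_range fun q => X q i * X q j) p

lemma exists_perm {X : Matrix (Fin n) (Fin n) ℝ} (hX : X ∈ Xset n n) :
    ∃ σ : Equiv.Perm (Fin n), ∀ p i, X p i = if p = σ i then 1 else 0 := by
  choose σ hσ using exists_eq_one hX
  have hinj : Function.Injective σ := by
    intro i j hij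
    by_contra hne
    have := mul_eq_zero_of_ne hX hne (σ i)
    rw [hσ i, hij, hσ j] at this
    norm_num at this
  let e := Equiv.ofBijective σ (Finite.injective_iff_bijective.mp hinj)
  refine ⟨e, fun p i => ?_⟩
  split_ifs with hp
  · exact hp ▸ hσ i
  · obtain ⟨j, rfl⟩ := e.surjective p
    have hji : j ≠ i := fun h => hp (h ▸ rfl)
    simpa [e, hσ j] using mul_eq_zero_of_ne hX hji.symm (σ j)

end Xset

lemma maxMul_transpose_perm_diag {n : ℕ} {X : Matrix (Fin n) (Fin n) ℝ} {σ : Equiv.Perm (Fin n)}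
    (hX : ∀ p i, X p i = if p = σ i then 1 else 0) {C : Matrix (Fin n) (Fin n) ℝ}
    (hC : ∀ i j, 0 ≤ C i j) (i : Fin n) :
    maxMul (maxMul Xᵀ C) X i i = C (σ i) (σ i) := by
  have hXC : ∀ q, maxMul Xᵀ C i q = C (σ i) q := fun q => by
    simpa [maxMul, hX, ite_mul] using ciSup_ite_eq (f := fun p => C p q) (hC (σ i) q)
  show (⨆ q, maxMul Xᵀ C i q * X q i) = _
  simpa only [hXC, hX, mul_ite, mul_one, mul_zero] using ciSup_ite_eq (hC (σ i) (σ i))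

lemma one_mem_Xset (n : ℕ) : (1 : Matrix (Fin n) (Fin n) ℝ) ∈ Xset n n := by
  have hone : ∀ i j, 0 ≤ (1 : Matrix (Fin n) (Fin n) ℝ) i j := fun i j => by
    rw [one_apply]; split_ifs <;> norm_num
  refine ⟨hone, ?_⟩
  ext i j
  have hcol : ∀ p, (1 : Matrix (Fin n) (Fin n) ℝ) p i * (1 : Matrix (Fin n) (Fin n) ℝ) p j =
      if p = i then (1 : Matrix (Fin n) (Fin n) ℝ) p j else 0 := fun p => by
    rw [one_apply]; split_ifs <;> simp
  simpa only [maxMul, of_apply, transpose_apply, hcol] using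
    ciSup_ite_eq (f := fun p => (1 : Matrix (Fin n) (Fin n) ℝ) p j) (hone i j)

lemma Wmax_self_eq_singleton {n : ℕ} {C : Matrix (Fin n) (Fin n) ℝ} (hC : ∀ i j, 0 ≤ C i j) :
    Wmax n C = {trMax C} := by
  have htr : ∀ X ∈ Xset n n, trMax (maxMul (maxMul Xᵀ C) X) = trMax C := fun X hX => by
    obtain ⟨σ, hσ⟩ := Xset.exists_perm hX
    simp only [trMax, maxMul_transpose_perm_diag hσ hC]
    exact σ.iSup_comp (g := fun i => C i i)
  ext z
  constructor
  · rintro ⟨X, hX, rfl⟩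
    exact htr X hX
  · rintro rfl
    exact ⟨1, one_mem_Xset n, (htr 1 (one_mem_Xset n)).symm⟩

theorem stmt_7_general {n k : ℕ}
    (A B : Matrix (Fin n) (Fin n) ℝ)
    (hA : ∀ i j, 0 ≤ A i j) (hB : ∀ i j, 0 ≤ B i j) :
    (Wmax k (Matrix.of fun i j => max (A i j) (B i j)) ⊆
      {z | ∃ s ∈ Wmax k A, ∃ t ∈ Wmax k B, z = max s t}) ∧
    (Wmax n (Matrix.of fun i j => max (A i j) (B i j)) =
      {z | ∃ s ∈ Wmax n A, ∃ t ∈ Wmax n B, z = max s t}) := by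
  have hAB : ∀ i j, 0 ≤ (of fun i j => max (A i j) (B i j) : Matrix (Fin n) (Fin n) ℝ) i j :=
    fun i j => (hA i j).trans (le_max_left _ _)
  refine ⟨Wmax_max_subset k A B, ?_⟩
  rw [Wmax_self_eq_singleton hAB, Wmax_self_eq_singleton hA, Wmax_self_eq_singleton hB,
    trMax_max]
  ext z
  simp

/-- For nonnegative `A, B ∈ M_n(ℝ₊)` and `1 ≤ k ≤ n`:
`W_max^k(A ⊕ B) ⊆ W_max^k(A) ⊕ W_max^k(B)` where `S ⊕ T = { max s t : s ∈ S, t ∈ T }`;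
moreover for `k = n` equality holds. -/
theorem stmt_7 {n k : ℕ} (hk : 1 ≤ k) (hkn : k ≤ n)
    (A B : Matrix (Fin n) (Fin n) ℝ)
    (hA : ∀ i j, 0 ≤ A i j) (hB : ∀ i j, 0 ≤ B i j) :
    (Wmax k (Matrix.of fun i j => max (A i j) (B i j)) ⊆
      {z | ∃ s ∈ Wmax k A, ∃ t ∈ Wmax k B, z = max s t}) ∧
    (Wmax n (Matrix.of fun i j => max (A i j) (B i j)) =
      {z | ∃ s ∈ Wmax n A, ∃ t ∈ Wmax n B, z = max s t}) :=
  stmt_7_general A B hA hB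
end
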